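/- arXiv:1106.3958 — 8 statements merged into one kernel-verified Lean document; each statement's English description precedes it below -/
import Mathlib

section
/- Let A and B be Hermitian n×n complex matrices with AB = BA. Then there exists a Hermitian n×n complex matrix C and polynomials f, g with complex coefficients such that A = f(C) and B = g(C) (evaluation of the polynomials at the matrix C). Consequently, a measurement of the observable C constitutes a joint measurement of A and B. -/
open Matrix

section Aux

variable {n : ℕ}

/-- aeval at a diagonal matrix. -/
lemma aeval_diagonal' (d : Fin n → ℂ) (p : Polynomial ℂ) :
    Polynomial.aeval (diagonal d) p = diagonal (fun i => p.eval (d i)) := by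
  have h : diagonal d = (Matrix.diagonalAlgHom ℂ : (Fin n → ℂ) →ₐ[ℂ] Matrix (Fin n) (Fin n) ℂ) d := rfl
  rw [h, Polynomial.aeval_algHom_apply]
  show Matrix.diagonal (Polynomial.aeval d p) = diagonal fun i => p.eval (d i)
  rw [Matrix.diagonal_eq_diagonal_iff]
  intro i
  rw [show (Polynomial.aeval d) p i = Polynomial.aeval (d i) p from
    Polynomial.aeval_algHom_apply (Pi.evalAlgHom ℂ (fun _ => ℂ) i) d p ▸ rfl,
    Polynomial.aeval_def]
  simp [Polynomial.eval₂_eq_eval_map, Algebra.algebraMap_self]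

/-- Conjugation by a unitary as an algebra hom. -/
noncomputable def conjAlgHom (U : Matrix.unitaryGroup (Fin n) ℂ) :
    Matrix (Fin n) (Fin n) ℂ →ₐ[ℂ] Matrix (Fin n) (Fin n) ℂ :=
  AlgHom.mk'
    { toFun := fun M => (U : Matrix (Fin n) (Fin n) ℂ) * M * star (U : Matrix (Fin n) (Fin n) ℂ)
      map_one' := by
        show (U : Matrix (Fin n) (Fin n) ℂ) * 1 * star (U : Matrix (Fin n) (Fin n) ℂ) = 1
        rw [mul_one]
        exact Matrix.mem_unitaryGroup_iff.mp U.2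
      map_mul' := fun M N => by
        have h : star (U : Matrix (Fin n) (Fin n) ℂ) * (U : Matrix (Fin n) (Fin n) ℂ) = 1 :=
          Matrix.mem_unitaryGroup_iff'.mp U.2
        calc (U : Matrix (Fin n) (Fin n) ℂ) * (M * N) * star (U : Matrix (Fin n) (Fin n) ℂ)
            = ((U : Matrix (Fin n) (Fin n) ℂ) * M) * (star (U : Matrix (Fin n) (Fin n) ℂ)
              * (U : Matrix (Fin n) (Fin n) ℂ)) * (N * star (U : Matrix (Fin n) (Fin n) ℂ)) := by
              rw [h, mul_one]
              simp only [Matrix.mul_assoc]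
          _ = _ := by simp only [Matrix.mul_assoc]
      map_zero' := by simp
      map_add' := fun M N => by noncomm_ring }
    (fun c M => by simp [Matrix.mul_smul, Matrix.smul_mul])

lemma aeval_conj (U : Matrix.unitaryGroup (Fin n) ℂ) (D : Matrix (Fin n) (Fin n) ℂ)
    (p : Polynomial ℂ) :
    Polynomial.aeval ((U : Matrix (Fin n) (Fin n) ℂ) * D * star (U : Matrix (Fin n) (Fin n) ℂ)) p
      = (U : Matrix (Fin n) (Fin n) ℂ) * Polynomial.aeval D p
        * star (U : Matrix (Fin n) (Fin n) ℂ) :=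
  Polynomial.aeval_algHom_apply (conjAlgHom U) D p


/-- The unitary whose columns are the given orthonormal basis. -/
noncomputable def obUnitary {n : ℕ}
    (u : OrthonormalBasis (Fin n) ℂ (EuclideanSpace ℂ (Fin n))) :
    Matrix.unitaryGroup (Fin n) ℂ :=
  ⟨(EuclideanSpace.basisFun (Fin n) ℂ).toBasis.toMatrix u.toBasis,
   (EuclideanSpace.basisFun (Fin n) ℂ).toMatrix_orthonormalBasis_mem_unitary u⟩

@[simp] lemma obUnitary_apply {n : ℕ}
    (u : OrthonormalBasis (Fin n) ℂ (EuclideanSpace ℂ (Fin n))) (i j : Fin n) :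
    (obUnitary u : Matrix (Fin n) (Fin n) ℂ) i j = u j i := rfl

lemma obUnitary_mulVec {n : ℕ}
    (u : OrthonormalBasis (Fin n) ℂ (EuclideanSpace ℂ (Fin n))) (j : Fin n) :
    (obUnitary u : Matrix (Fin n) (Fin n) ℂ) *ᵥ Pi.single j 1 = ⇑(u j) := by
  simp only [mulVec_single, obUnitary_apply, mul_one]
  rw [MulOpposite.op_one, one_smul]
  rfl

lemma star_obUnitary_mulVec {n : ℕ}
    (u : OrthonormalBasis (Fin n) ℂ (EuclideanSpace ℂ (Fin n))) (j : Fin n) :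
    (star (obUnitary u : Matrix (Fin n) (Fin n) ℂ)) *ᵥ ⇑(u j) = Pi.single j 1 := by
  rw [← obUnitary_mulVec, mulVec_mulVec, Unitary.coe_star_mul_self, one_mulVec]

lemma star_mul_conj_eq_diagonal {n : ℕ}
    (u : OrthonormalBasis (Fin n) ℂ (EuclideanSpace ℂ (Fin n)))
    (M : Matrix (Fin n) (Fin n) ℂ) (α : Fin n → ℂ)
    (hM : ∀ j, M *ᵥ ⇑(u j) = α j • ⇑(u j)) :
    star (obUnitary u : Matrix (Fin n) (Fin n) ℂ) * M * (obUnitary u : Matrix (Fin n) (Fin n) ℂ)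
      = diagonal α := by
  apply Matrix.toEuclideanLin.injective
  apply Module.Basis.ext (EuclideanSpace.basisFun (Fin n) ℂ).toBasis
  intro i
  simp only [toEuclideanLin_apply, OrthonormalBasis.coe_toBasis, EuclideanSpace.basisFun_apply,
    PiLp.ofLp_single, ← mulVec_mulVec, obUnitary_mulVec, hM, Matrix.diagonal_mulVec_single,
    mulVec_smul, star_obUnitary_mulVec, WithLp.toLp_smul, PiLp.toLp_single, mul_one]
  apply PiLp.ext
  intro j
  simp only [PiLp.smul_apply, EuclideanSpace.single_apply, smul_eq_mul, mul_ite, mul_one, mul_zero]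

lemma conj_diag_decomp {n : ℕ}
    (u : OrthonormalBasis (Fin n) ℂ (EuclideanSpace ℂ (Fin n)))
    (M : Matrix (Fin n) (Fin n) ℂ) (α : Fin n → ℂ)
    (hM : ∀ j, M *ᵥ ⇑(u j) = α j • ⇑(u j)) :
    M = (obUnitary u : Matrix (Fin n) (Fin n) ℂ) * diagonal α
        * star (obUnitary u : Matrix (Fin n) (Fin n) ℂ) := by
  rw [← star_mul_conj_eq_diagonal u M α hM, mul_assoc, mul_assoc,
    (Matrix.mem_unitaryGroup_iff).mp (obUnitary u).2, mul_one,
    ← mul_assoc, (Matrix.mem_unitaryGroup_iff).mp (obUnitary u).2, one_mul]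

lemma toEuclideanLin_mul {n : ℕ} (M N : Matrix (Fin n) (Fin n) ℂ) :
    Matrix.toEuclideanLin (M * N) = Matrix.toEuclideanLin M * Matrix.toEuclideanLin N := by
  simp only [Matrix.toEuclideanLin_eq_toLin]
  rw [Matrix.toLin_mul _ (PiLp.basisFun 2 ℂ (Fin n)) _]
  rfl

end Aux

set_option maxHeartbeats 2000000 in
/-- Commuting Hermitian matrices are both polynomials in a single
Hermitian matrix `C`; a measurement of `C` is a joint measurement of `A` and `B`. -/
theorem commuting_hermitian_jointly_measurable
    (n : ℕ) (A B : Matrix (Fin n) (Fin n) ℂ)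
    (hA : A.IsHermitian) (hB : B.IsHermitian) (hAB : A * B = B * A) :
    ∃ C : Matrix (Fin n) (Fin n) ℂ, C.IsHermitian ∧
      ∃ f g : Polynomial ℂ,
        A = Polynomial.aeval C f ∧ B = Polynomial.aeval C g := by
  classical
  set A' := Matrix.toEuclideanLin A with hA'def
  set B' := Matrix.toEuclideanLin B with hB'def
  have hA' : A'.IsSymmetric := Matrix.isHermitian_iff_isSymmetric.mp hA
  have hB' : B'.IsSymmetric := Matrix.isHermitian_iff_isSymmetric.mp hB
  have hcomm : Commute A' B' := by
    unfold Commute SemiconjBy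
    rw [hA'def, hB'def, ← toEuclideanLin_mul, ← toEuclideanLin_mul, hAB]
  have hn : Module.finrank ℂ (EuclideanSpace ℂ (Fin n)) = n := finrank_euclideanSpace_fin
  have hV : DirectSum.IsInternal (fun c : ℂ × ℂ =>
      Module.End.eigenspace A' c.2 ⊓ Module.End.eigenspace B' c.1) :=
    hA'.directSum_isInternal_of_commute hB' hcomm
  have hV' := hA'.orthogonalFamily_eigenspace_inf_eigenspace hB'
  set V : ℂ × ℂ → Submodule ℂ (EuclideanSpace ℂ (Fin n)) := fun c =>
    Module.End.eigenspace A' c.2 ⊓ Module.End.eigenspace B' c.1 with hVdef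
  have hW : DirectSum.IsInternal (fun i : {c // V c ≠ ⊥} => V i.1) :=
    DirectSum.isInternal_ne_bot_iff.mpr hV
  have hfin : Finite {c // V c ≠ ⊥} := by
    have := Submodule.finite_ne_bot_of_iSupIndep hV.submodule_iSupIndep
    exact this.to_subtype
  have : Fintype {c // V c ≠ ⊥} := Fintype.ofFinite _
  have hW' := hV'.comp
    (Subtype.val_injective : Function.Injective (Subtype.val : {c // V c ≠ ⊥} → ℂ × ℂ))
  set u := hW.subordinateOrthonormalBasis hn hW' with hudef
  set μ := fun a => hW.subordinateOrthonormalBasisIndex hn a hW' with hμdef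
  have hmem : ∀ a, u a ∈ Module.End.eigenspace A' ((μ a).1).2
      ⊓ Module.End.eigenspace B' ((μ a).1).1 :=
    fun a => hW.subordinateOrthonormalBasis_subordinate hn a hW'
  set α : Fin n → ℂ := fun a => ((μ a).1).2 with hαdef
  set β : Fin n → ℂ := fun a => ((μ a).1).1 with hβdef
  have hAa : ∀ a, A *ᵥ ⇑(u a) = α a • ⇑(u a) := by
    intro a
    have h1 : A' (u a) = α a • u a := Module.End.mem_eigenspace_iff.mp (hmem a).1
    exact congrArg (WithLp.equiv 2 (Fin n → ℂ)) h1
  have hBa : ∀ a, B *ᵥ ⇑(u a) = β a • ⇑(u a) := by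
    intro a
    have h1 : B' (u a) = β a • u a := Module.End.mem_eigenspace_iff.mp (hmem a).2
    exact congrArg (WithLp.equiv 2 (Fin n → ℂ)) h1
  have hAdec := conj_diag_decomp u A α hAa
  have hBdec := conj_diag_decomp u B β hBa
  set U := obUnitary u with hUdef
  set dc : Fin n → ℂ := fun i => ((i : ℕ) : ℂ) with hdcdef
  have hdinj : Set.InjOn dc (Finset.univ : Finset (Fin n)) := by
    intro i _ j _ h
    exact Fin.val_injective (Nat.cast_injective h)
  refine ⟨(U : Matrix (Fin n) (Fin n) ℂ) * diagonal dc * star (U : Matrix (Fin n) (Fin n) ℂ),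
    ?_, Lagrange.interpolate Finset.univ dc α, Lagrange.interpolate Finset.univ dc β, ?_, ?_⟩
  · show _ = _
    have hd : star dc = dc := by
      funext i
      simp [hdcdef]
    rw [Matrix.star_eq_conjTranspose]
    simp only [Matrix.conjTranspose_mul, Matrix.conjTranspose_conjTranspose,
      Matrix.diagonal_conjTranspose, hd, Matrix.mul_assoc]
  · rw [aeval_conj, aeval_diagonal']
    have : (fun i => (Lagrange.interpolate Finset.univ dc α).eval (dc i)) = α := by
      funext i
      exact Lagrange.eval_interpolate_at_node _ hdinj (Finset.mem_univ i)
    rw [this]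
    exact hAdec
  · rw [aeval_conj, aeval_diagonal']
    have : (fun i => (Lagrange.interpolate Finset.univ dc β).eval (dc i)) = β := by
      funext i
      exact Lagrange.eval_interpolate_at_node _ hdinj (Finset.mem_univ i)
    rw [this]
    exact hBdec
end

section
/- Let (P_i)_{i∈I} be a complete orthogonal family of projections on ℂ^n (indexed by a finite set I) and let Q be an n×n complex matrix that is an orthogonal projection (Q² = Q = Q*). If ∑_{i∈I} P_i Q P_i = Q, then P_i Q P_j = 0 for all i ≠ j in I. -/
open Matrix
/-- If `(P i)` is a complete orthogonal family of projections on `ℂⁿ`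
and `Q` is an orthogonal projection with `∑ i, P i * Q * P i = Q`, then the cross
terms `P i * Q * P j` vanish for `i ≠ j`. -/
theorem cross_terms_vanish
    {n : ℕ} {I : Type*} [Fintype I]
    (P : I → Matrix (Fin n) (Fin n) ℂ)
    (hPidem : ∀ i, P i * P i = P i)
    (hPherm : ∀ i, (P i)ᴴ = P i)
    (hPorth : ∀ i j, i ≠ j → P i * P j = 0)
    (hPcomplete : ∑ i, P i = 1)
    (Q : Matrix (Fin n) (Fin n) ℂ)
    (hQidem : Q * Q = Q) (hQherm : Qᴴ = Q)
    (h : ∑ i, P i * Q * P i = Q) :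
    ∀ i j, i ≠ j → P i * Q * P j = 0 := by
  intro i j hij
  have key := congrArg (fun M => P i * M * P j) h
  simp only [Finset.mul_sum, Finset.sum_mul] at key
  rw [← key]
  apply Finset.sum_eq_zero
  intro k _
  by_cases hk : k = i
  · subst hk
    rw [mul_assoc, mul_assoc, mul_assoc, hPorth k j hij, mul_zero, mul_zero, mul_zero]
  · rw [← mul_assoc, ← mul_assoc, hPorth i k (Ne.symm hk), zero_mul, zero_mul, zero_mul]
end

section
/- Let (P_i)_{i∈I} be a complete orthogonal family of projections on ℂ^n (indexed by a finite set I) and let Q be an n×n complex matrix that is an orthogonal projection (Q² = Q = Q*). Then ∑_{i∈I} P_i Q P_i = Q if and only if P_i Q = Q P_i for all i ∈ I. -/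
open Matrix

/-- For a complete orthogonal family of projections `(P i)` on `ℂⁿ`
and an orthogonal projection `Q`, the nondisturbance identity `∑ i, P i * Q * P i = Q`
holds iff `Q` commutes with every `P i`. -/
theorem nondisturbance_iff_commutes
    {n : ℕ} {I : Type*} [Fintype I]
    (P : I → Matrix (Fin n) (Fin n) ℂ)
    (hPidem : ∀ i, P i * P i = P i)
    (hPherm : ∀ i, (P i)ᴴ = P i)
    (hPorth : ∀ i j, i ≠ j → P i * P j = 0)
    (hPcomplete : ∑ i, P i = 1)
    (Q : Matrix (Fin n) (Fin n) ℂ)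
    (hQidem : Q * Q = Q) (hQherm : Qᴴ = Q) :
    (∑ i, P i * Q * P i = Q) ↔ (∀ i, P i * Q = Q * P i) := by
  constructor
  · intro h j
    have hl : P j * Q = P j * Q * P j := by
      conv_lhs => rw [← h]
      rw [Finset.mul_sum, Finset.sum_eq_single j]
      · rw [← mul_assoc, ← mul_assoc, hPidem]
      · intro i _ hij
        rw [← mul_assoc, ← mul_assoc, hPorth j i (Ne.symm hij)]; simp
      · simp
    have hr : Q * P j = P j * Q * P j := by
      nth_rewrite 1 [← h]
      rw [Finset.sum_mul]
      rw [Finset.sum_eq_single j]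
      · rw [mul_assoc, hPidem]
      · intro i _ hij
        rw [mul_assoc, hPorth i j hij]; simp
      · simp
    rw [hl, hr]
  · intro h
    calc ∑ i, P i * Q * P i = ∑ i, Q * (P i * P i) := by
          refine Finset.sum_congr rfl fun i _ => ?_
          rw [h i, mul_assoc]
      _ = Q * ∑ i, P i := by simp [hPidem, Finset.mul_sum]
      _ = Q := by rw [hPcomplete, mul_one]
end

section
/- Let (P_i)_{i∈I} and (Q_j)_{j∈J} be complete orthogonal families of projections on ℂ^n (indexed by finite sets I and J). Then the following are equivalent: (1) for every density matrix ρ on ℂ^n and every j ∈ J, trace(Q_j · ∑_{i∈I} P_i ρ P_i) = trace(Q_j ρ); (2) P_i Q_j = Q_j P_i for all i ∈ I and j ∈ J. Operationally, (1) says that first performing a nonselective projective measurement of the observable with spectral projections (P_i) never changes the outcome distribution of a subsequent measurement of the observable with spectral projections (Q_j). -/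
open Matrix
open scoped ComplexOrder

private lemma quad_zero' {n : ℕ} (A : Matrix (Fin n) (Fin n) ℂ)
    (h : ∀ x : Fin n → ℂ, star x ⬝ᵥ A *ᵥ x = 0) : A = 0 := by
  have hT : Matrix.toEuclideanLin A = 0 := by
    rw [← inner_map_self_eq_zero]
    intro v
    have h0 := h ((WithLp.equiv 2 (Fin n → ℂ)) v)
    rw [← star_eq_zero]
    rw [EuclideanSpace.inner_eq_star_dotProduct]
    simp only [Matrix.ofLp_toEuclideanLin_apply]
    rw [dotProduct_star]
    simp only [star_star, star_mulVec]
    rw [dotProduct_comm]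
    exact h0
  have := congrArg Matrix.toEuclideanLin.symm hT
  simpa using this

private lemma trace_mul_vecMulVec' {n : ℕ} (A : Matrix (Fin n) (Fin n) ℂ) (x : Fin n → ℂ) :
    (A * vecMulVec x (star x)).trace = star x ⬝ᵥ A *ᵥ x := by
  simp only [Matrix.trace, Matrix.diag, Matrix.mul_apply, vecMulVec_apply,
    dotProduct, Matrix.mulVec, Pi.star_apply, Finset.mul_sum]
  congr 1; ext i; congr 1; ext k; ring

private lemma density_test' {n : ℕ} (A : Matrix (Fin n) (Fin n) ℂ)
    (h : ∀ ρ : Matrix (Fin n) (Fin n) ℂ, ρ.PosSemidef → ρ.trace = 1 → (A * ρ).trace = 0) :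
    A = 0 := by
  apply quad_zero'
  intro x
  by_cases hx : x = 0
  · simp [hx]
  · set c : ℂ := star x ⬝ᵥ x with hc
    have hc0 : 0 ≤ c := dotProduct_star_self_nonneg x
    have hcne : c ≠ 0 := fun h0 => hx (dotProduct_star_self_eq_zero.mp h0)
    have him : c.im = 0 := by
      have := (Complex.le_def.mp hc0).2; simpa using this.symm
    have hre : 0 ≤ c.re := by
      have := (Complex.le_def.mp hc0).1; simpa using this
    have hcr : c = (c.re : ℂ) := by
      apply Complex.ext <;> simp [him]
    set ρ : Matrix (Fin n) (Fin n) ℂ := c⁻¹ • vecMulVec x (star x) with hρ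
    have hch : (starRingEnd ℂ) c = c := Complex.conj_eq_iff_im.mpr him
    have hpsd : ρ.PosSemidef := by
      refine .of_dotProduct_mulVec_nonneg ?_ ?_
      · unfold Matrix.IsHermitian
        ext i k
        simp only [hρ, Matrix.conjTranspose_apply, Matrix.smul_apply, vecMulVec_apply,
          Pi.star_apply, star_mul', star_star, smul_eq_mul, Complex.star_def,
          map_inv₀, hch, Complex.conj_conj]
        ring
      · intro y
        rw [hρ, Matrix.smul_mulVec, dotProduct_smul]
        have h1 : (vecMulVec x (star x)) *ᵥ y = (star x ⬝ᵥ y) • x := by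
          ext i
          simp only [Matrix.mulVec, dotProduct, vecMulVec_apply, Pi.smul_apply,
            smul_eq_mul, Pi.star_apply, Finset.sum_mul]
          refine Finset.sum_congr rfl fun k _ => ?_; ring
        have h2 : star y ⬝ᵥ x = (starRingEnd ℂ) (star x ⬝ᵥ y) := by
          simp only [dotProduct, map_sum, _root_.map_mul, Pi.star_apply,
            Complex.conj_conj, Complex.star_def]
          refine Finset.sum_congr rfl fun k _ => ?_; ring
        have hV : star y ⬝ᵥ (vecMulVec x (star x)) *ᵥ y
            = (starRingEnd ℂ) (star x ⬝ᵥ y) * (star x ⬝ᵥ y) := by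
          rw [h1, dotProduct_smul, h2, smul_eq_mul, mul_comm]
        rw [hV, ← Complex.normSq_eq_conj_mul_self, smul_eq_mul]
        rw [hcr, ← Complex.ofReal_inv, ← Complex.ofReal_mul]
        rw [Complex.zero_le_real]
        exact mul_nonneg (inv_nonneg.mpr hre) (Complex.normSq_nonneg _)
    have htr : ρ.trace = 1 := by
      rw [hρ, Matrix.trace_smul]
      have : (vecMulVec x (star x)).trace = c := by
        simp only [Matrix.trace, Matrix.diag, vecMulVec_apply, hc, dotProduct,
          Pi.star_apply]
        congr 1; ext i; ring
      rw [this, smul_eq_mul, inv_mul_cancel₀ hcne]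
    have h0 := h ρ hpsd htr
    rw [hρ, Matrix.mul_smul, Matrix.trace_smul, trace_mul_vecMulVec', smul_eq_mul] at h0
    rcases mul_eq_zero.mp h0 with h1 | h1
    · exact absurd (inv_eq_zero.mp h1) hcne
    · exact h1


/-- For two complete orthogonal families of projections `(P i)` and
`(Q j)` on `ℂⁿ`, the nonselective Lüders measurement of the first observable never
changes the outcome distribution of a subsequent measurement of the second observable
(on every density matrix) iff all the projections commute pairwise. -/
theorem asymmetric_nondisturbance_iff_commute
    {n : ℕ} {I J : Type*} [Fintype I] [Fintype J]
    (P : I → Matrix (Fin n) (Fin n) ℂ)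
    (hPidem : ∀ i, P i * P i = P i)
    (hPherm : ∀ i, (P i)ᴴ = P i)
    (hPorth : ∀ i i', i ≠ i' → P i * P i' = 0)
    (hPcomplete : ∑ i, P i = 1)
    (Q : J → Matrix (Fin n) (Fin n) ℂ)
    (hQidem : ∀ j, Q j * Q j = Q j)
    (hQherm : ∀ j, (Q j)ᴴ = Q j)
    (hQorth : ∀ j j', j ≠ j' → Q j * Q j' = 0)
    (hQcomplete : ∑ j, Q j = 1) :
    (∀ ρ : Matrix (Fin n) (Fin n) ℂ, ρ.PosSemidef → ρ.trace = 1 →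
        ∀ j, (Q j * ∑ i, P i * ρ * P i).trace = (Q j * ρ).trace) ↔
      (∀ i j, P i * Q j = Q j * P i) := by
  classical
  constructor
  · intro h
    have hM : ∀ j, (∑ i, P i * Q j * P i) = Q j := by
      intro j
      have hz : ((∑ i, P i * Q j * P i) - Q j) = 0 := by
        apply density_test'
        intro ρ hρ htr
        have htrace : ((∑ i, P i * Q j * P i) * ρ).trace
            = (Q j * ∑ i, P i * ρ * P i).trace := by
          rw [Finset.sum_mul, Matrix.trace_sum, Finset.mul_sum, Matrix.trace_sum]
          refine Finset.sum_congr rfl fun i _ => ?_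
          rw [show Q j * (P i * ρ * P i) = (Q j * P i) * ρ * P i by
            simp only [mul_assoc]]
          rw [Matrix.trace_mul_cycle (Q j * P i) ρ (P i)]
          rw [show P i * (Q j * P i) * ρ = P i * Q j * P i * ρ by
            simp only [mul_assoc]]
        rw [Matrix.sub_mul, Matrix.trace_sub, htrace, h ρ hρ htr j, sub_self]
      exact sub_eq_zero.mp hz
    intro i j
    have h1 : P i * Q j = P i * Q j * P i := by
      conv_lhs => rw [← hM j, Finset.mul_sum]
      rw [Finset.sum_eq_single i]
      · rw [show P i * (P i * Q j * P i) = (P i * P i) * Q j * P i by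
          simp only [mul_assoc], hPidem]
      · intro b _ hb
        rw [show P i * (P b * Q j * P b) = (P i * P b) * Q j * P b by
          simp only [mul_assoc], hPorth i b (Ne.symm hb)]
        simp
      · intro hi; exact absurd (Finset.mem_univ i) hi
    have h2 : Q j * P i = P i * Q j * P i := by
      conv_lhs => rw [← hM j, Finset.sum_mul]
      rw [Finset.sum_eq_single i]
      · rw [mul_assoc (P i * Q j) (P i) (P i), hPidem]
      · intro b _ hb
        rw [mul_assoc (P b * Q j) (P b) (P i), hPorth b i hb]
        simp
      · intro hi; exact absurd (Finset.mem_univ i) hi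
    rw [h1, h2]
  · intro hcomm ρ hρ htr j
    have key : ∀ i, (Q j * (P i * ρ * P i)).trace = (Q j * P i * ρ).trace := by
      intro i
      rw [show Q j * (P i * ρ * P i) = (Q j * P i) * ρ * P i by simp only [mul_assoc]]
      rw [Matrix.trace_mul_cycle (Q j * P i) ρ (P i)]
      rw [show P i * (Q j * P i) * ρ = (P i * Q j) * P i * ρ by simp only [mul_assoc]]
      rw [hcomm i j, mul_assoc (Q j) (P i) (P i), hPidem]
    rw [Finset.mul_sum, Matrix.trace_sum]
    calc ∑ i, (Q j * (P i * ρ * P i)).trace = ∑ i, (Q j * P i * ρ).trace :=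
          Finset.sum_congr rfl fun i _ => key i
      _ = (Q j * ρ).trace := by
          rw [← Matrix.trace_sum]
          congr 1
          rw [← Finset.sum_mul]
          rw [show ∑ i, Q j * P i = Q j * ∑ i, P i from (Finset.mul_sum _ _ _).symm]
          rw [hPcomplete, mul_one]
end

section
/- Let (P_i)_{i∈I} and (Q_j)_{j∈J} be complete orthogonal families of projections on ℂ^n (indexed by finite sets I and J). Then the following are equivalent: (1) for every density matrix ρ on ℂ^n, every pair of distinct indices i ≠ i' in I and every j ∈ J, trace(P_{i'} Q_j P_i ρ P_i Q_j P_{i'}) = 0; (2) P_i Q_j = Q_j P_i for all i ∈ I and j ∈ J. Operationally, (1) says that in the measurement sequence A, B, A (with A the observable with spectral projections (P_i) and B the observable with spectral projections (Q_j)), the two measurements of A always give the same outcome, on every initial state. -/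
open Matrix
open scoped ComplexOrder

lemma aux_trace_mul_conjTranspose_self_eq_zero {m : Type*} [Fintype m] [DecidableEq m]
    {A : Matrix m m ℂ} (h : (A * Aᴴ).trace = 0) : A = 0 := by
  have h1 : (A * Aᴴ).trace = ∑ i, ∑ j, (Complex.normSq (A i j) : ℂ) := by
    simp [Matrix.trace, Matrix.mul_apply, Matrix.conjTranspose_apply, Matrix.diag,
      Complex.mul_conj]
  rw [h1] at h
  have h2 : ∑ i, ∑ j, Complex.normSq (A i j) = 0 := by
    have := congrArg Complex.re h
    simpa using this
  ext i j
  have hnonneg : ∀ i ∈ Finset.univ, (0:ℝ) ≤ ∑ j, Complex.normSq (A i j) :=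
    fun i _ => Finset.sum_nonneg fun j _ => Complex.normSq_nonneg _
  have h3 := (Finset.sum_eq_zero_iff_of_nonneg hnonneg).mp h2 i (Finset.mem_univ i)
  have h4 := (Finset.sum_eq_zero_iff_of_nonneg
    (fun j _ => Complex.normSq_nonneg (A i j))).mp h3 j (Finset.mem_univ j)
  simpa using Complex.normSq_eq_zero.mp h4

/-- For two complete orthogonal families of projections `(P i)` and
`(Q j)` on `ℂⁿ`, the measurement sequence A, B, A (Lüders rule) gives the same outcome
for the two measurements of A with probability 1 on every density matrix iff all the
projections commute pairwise: the probability of the outcome sequence `(i, j, i')`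
on the initial state `ρ` is `trace (P i' * Q j * P i * ρ * P i * Q j * P i')`. -/
theorem symmetric_nondisturbance_iff_commute
    {n : ℕ} {I J : Type*} [Fintype I] [Fintype J]
    (P : I → Matrix (Fin n) (Fin n) ℂ)
    (hPidem : ∀ i, P i * P i = P i)
    (hPherm : ∀ i, (P i)ᴴ = P i)
    (hPorth : ∀ i i', i ≠ i' → P i * P i' = 0)
    (hPcomplete : ∑ i, P i = 1)
    (Q : J → Matrix (Fin n) (Fin n) ℂ)
    (hQidem : ∀ j, Q j * Q j = Q j)
    (hQherm : ∀ j, (Q j)ᴴ = Q j)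
    (hQorth : ∀ j j', j ≠ j' → Q j * Q j' = 0)
    (hQcomplete : ∑ j, Q j = 1) :
    (∀ ρ : Matrix (Fin n) (Fin n) ℂ, ρ.PosSemidef → ρ.trace = 1 →
        ∀ i i' : I, i ≠ i' → ∀ j : J,
          (P i' * Q j * P i * ρ * P i * Q j * P i').trace = 0) ↔
      (∀ i j, P i * Q j = Q j * P i) := by
  constructor
  · intro h i j
    rcases Nat.eq_zero_or_pos n with hn | hn
    · subst hn
      ext x y
      exact absurd x.2 (by omega)
    -- key: for i ≠ i', P i' * Q j * P i = 0
    have key : ∀ i i' : I, i ≠ i' → P i' * Q j * P i = 0 := by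
      intro i i' hii
      set A := P i' * Q j * P i with hA
      have hAH : Aᴴ = P i * Q j * P i' := by
        simp [hA, Matrix.conjTranspose_mul, hPherm, hQherm, Matrix.mul_assoc]
      have hc : (0:ℂ) ≤ (n : ℂ)⁻¹ := by
        rw [show ((n:ℂ)⁻¹) = (((n:ℝ)⁻¹ : ℝ) : ℂ) by push_cast; ring, Complex.zero_le_real]
        positivity
      have hdiag : (n : ℂ)⁻¹ • (1 : Matrix (Fin n) (Fin n) ℂ)
          = Matrix.diagonal (fun _ => (n : ℂ)⁻¹) := by
        ext x y
        by_cases hxy : x = y <;>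
          simp [Matrix.one_apply, Matrix.diagonal_apply, hxy]
      have hρ : ((n : ℂ)⁻¹ • (1 : Matrix (Fin n) (Fin n) ℂ)).PosSemidef := by
        rw [hdiag]
        exact Matrix.posSemidef_diagonal_iff.mpr (fun _ => hc)
      have htr : ((n : ℂ)⁻¹ • (1 : Matrix (Fin n) (Fin n) ℂ)).trace = 1 := by
        simp [Matrix.trace_smul]
        rw [inv_mul_cancel₀]
        exact_mod_cast hn.ne'
      have h0 := h _ hρ htr i i' hii j
      have heq : P i' * Q j * P i * ((n : ℂ)⁻¹ • 1) * P i * Q j * P i'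
          = (n : ℂ)⁻¹ • (A * Aᴴ) := by
        rw [hAH, hA]
        simp only [Matrix.mul_smul, Matrix.smul_mul, Matrix.mul_one]
        congr 1
        have : P i' * Q j * P i * P i = P i' * Q j * P i := by
          rw [Matrix.mul_assoc, hPidem]
        simp only [Matrix.mul_assoc] at this ⊢
      rw [heq, Matrix.trace_smul, smul_eq_zero] at h0
      rcases h0 with h0 | h0
      · exact absurd (inv_eq_zero.mp h0) (by exact_mod_cast hn.ne')
      · exact aux_trace_mul_conjTranspose_self_eq_zero h0
    -- now derive commutation
    have h1 : Q j * P i = P i * Q j * P i := by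
      calc Q j * P i = (∑ i', P i') * Q j * P i := by rw [hPcomplete, Matrix.one_mul]
        _ = ∑ i', P i' * Q j * P i := by
            rw [Finset.sum_mul, Finset.sum_mul]
        _ = P i * Q j * P i := by
            rw [Finset.sum_eq_single i]
            · intro i' _ hne
              exact key i i' (fun e => hne e.symm)
            · intro hmem; exact absurd (Finset.mem_univ i) hmem
    have h2 : P i * Q j = P i * Q j * P i := by
      calc P i * Q j = P i * Q j * (∑ i', P i') := by rw [hPcomplete, Matrix.mul_one]
        _ = ∑ i', P i * Q j * P i' := by rw [Finset.mul_sum]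
        _ = P i * Q j * P i := by
            rw [Finset.sum_eq_single i]
            · intro i' _ hne
              have : (P i' * Q j * P i)ᴴ = 0 := by
                rw [key i i' (fun e => hne e.symm)]; simp
              simpa [Matrix.conjTranspose_mul, hPherm, hQherm, Matrix.mul_assoc] using this
            · intro hmem; exact absurd (Finset.mem_univ i) hmem
    rw [h2, h1]
  · intro h ρ _ _ i i' hii j
    have : P i' * Q j * P i = 0 := by
      rw [Matrix.mul_assoc, ← h i j, ← Matrix.mul_assoc, hPorth i' i (fun e => hii e.symm)]
      simp
    simp [this]
end

section
/- There exist six probability distributions on ({-1,+1})², one for each unordered pair from the four observables {A₁, A₂, B₁, B₂} — namely P_{A₁,A₂}, P_{A₁,B₁}, P_{A₁,B₂}, P_{A₂,B₁}, P_{A₂,B₂}, P_{B₁,B₂} — such that: (1) the marginal distribution of each single observable is the same regardless of which pair distribution it is computed from (consistency of marginals, which includes the no-signaling conditions); and (2) the four Alice–Bob pair distributions P_{A_i,B_j} equal the Popescu–Rohrlich box distributions. In particular, a state of the toy theory of Section 4 exists in which all pairs of the four basic observables are jointly measurable (each pair has a joint distribution) while the Alice–Bob correlations maximally violate the CHSH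 inequality. -/
/-- There exist six joint probability distributions on `{-1,+1}²`,
one for each pair of the four observables `A₁, A₂, B₁, B₂`, with consistent
single-observable marginals (in particular no-signaling), whose four Alice–Bob pair
distributions are those of the Popescu–Rohrlich box.  This is a state of the toy
theory of Section 4 of the paper: all pairs of observables are jointly measurable,
yet the CHSH inequality is maximally violated. -/
theorem exists_pairwise_joint_distributions_PR_box :
    ∃ (P₁₂ P₁₃ P₁₄ P₂₃ P₂₄ P₃₄ : ℤ → ℤ → ℝ),
      -- each of the six pair distributions is a probability distribution on {-1,1}²
      (∀ Q ∈ [P₁₂, P₁₃, P₁₄, P₂₃, P₂₄, P₃₄],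
        (∀ x ∈ ({-1, 1} : Finset ℤ), ∀ y ∈ ({-1, 1} : Finset ℤ), 0 ≤ Q x y) ∧
        (∑ x ∈ ({-1, 1} : Finset ℤ), ∑ y ∈ ({-1, 1} : Finset ℤ), Q x y = 1)) ∧
      -- consistency of the marginal of A₁ (computed from P₁₂, P₁₃, P₁₄)
      (∀ x ∈ ({-1, 1} : Finset ℤ),
        (∑ y ∈ ({-1, 1} : Finset ℤ), P₁₂ x y) = (∑ y ∈ ({-1, 1} : Finset ℤ), P₁₃ x y) ∧
        (∑ y ∈ ({-1, 1} : Finset ℤ), P₁₂ x y) = (∑ y ∈ ({-1, 1} : Finset ℤ), P₁₄ x y)) ∧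
      -- consistency of the marginal of A₂ (computed from P₁₂, P₂₃, P₂₄)
      (∀ x ∈ ({-1, 1} : Finset ℤ),
        (∑ y ∈ ({-1, 1} : Finset ℤ), P₁₂ y x) = (∑ y ∈ ({-1, 1} : Finset ℤ), P₂₃ x y) ∧
        (∑ y ∈ ({-1, 1} : Finset ℤ), P₁₂ y x) = (∑ y ∈ ({-1, 1} : Finset ℤ), P₂₄ x y)) ∧
      -- consistency of the marginal of B₁ (computed from P₁₃, P₂₃, P₃₄)
      (∀ x ∈ ({-1, 1} : Finset ℤ),
        (∑ y ∈ ({-1, 1} : Finset ℤ), P₁₃ y x) = (∑ y ∈ ({-1, 1} : Finset ℤ), P₂₃ y x) ∧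
        (∑ y ∈ ({-1, 1} : Finset ℤ), P₁₃ y x) = (∑ y ∈ ({-1, 1} : Finset ℤ), P₃₄ x y)) ∧
      -- consistency of the marginal of B₂ (computed from P₁₄, P₂₄, P₃₄)
      (∀ x ∈ ({-1, 1} : Finset ℤ),
        (∑ y ∈ ({-1, 1} : Finset ℤ), P₁₄ y x) = (∑ y ∈ ({-1, 1} : Finset ℤ), P₂₄ y x) ∧
        (∑ y ∈ ({-1, 1} : Finset ℤ), P₁₄ y x) = (∑ y ∈ ({-1, 1} : Finset ℤ), P₃₄ y x)) ∧
      -- the four Alice–Bob pair distributions are those of the PR box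
      (∀ x ∈ ({-1, 1} : Finset ℤ), ∀ y ∈ ({-1, 1} : Finset ℤ),
        P₁₃ x y = (if x = y then 1/2 else 0) ∧
        P₁₄ x y = (if x = y then 1/2 else 0) ∧
        P₂₃ x y = (if x = y then 1/2 else 0) ∧
        P₂₄ x y = (if x = -y then 1/2 else 0)) := by
  refine ⟨fun _ _ => 1/4, fun x y => if x = y then 1/2 else 0,
    fun x y => if x = y then 1/2 else 0, fun x y => if x = y then 1/2 else 0,
    fun x y => if x = -y then 1/2 else 0, fun _ _ => 1/4, ?_, ?_, ?_, ?_, ?_, ?_⟩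
  · have hne : ((-1:ℤ)) ≠ 1 := by norm_num
    intro Q hQ
    fin_cases hQ <;> refine ⟨fun x hx y hy => ?_, ?_⟩ <;>
      [ (fin_cases hx <;> fin_cases hy <;> norm_num);
        norm_num [Finset.sum_pair (show ((-1:ℤ)) ≠ 1 by norm_num)];
        (fin_cases hx <;> fin_cases hy <;> norm_num);
        norm_num [Finset.sum_pair (show ((-1:ℤ)) ≠ 1 by norm_num)];
        (fin_cases hx <;> fin_cases hy <;> norm_num);
        norm_num [Finset.sum_pair (show ((-1:ℤ)) ≠ 1 by norm_num)];
        (fin_cases hx <;> fin_cases hy <;> norm_num);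
        norm_num [Finset.sum_pair (show ((-1:ℤ)) ≠ 1 by norm_num)];
        (fin_cases hx <;> fin_cases hy <;> norm_num);
        norm_num [Finset.sum_pair (show ((-1:ℤ)) ≠ 1 by norm_num)];
        (fin_cases hx <;> fin_cases hy <;> norm_num);
        norm_num [Finset.sum_pair (show ((-1:ℤ)) ≠ 1 by norm_num)]]
  · intro x hx; fin_cases hx <;> norm_num [Finset.sum_pair (show ((-1:ℤ)) ≠ 1 by norm_num)] <;> norm_num
  · intro x hx; fin_cases hx <;> norm_num [Finset.sum_pair (show ((-1:ℤ)) ≠ 1 by norm_num)] <;> norm_num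
  · intro x hx; fin_cases hx <;> norm_num [Finset.sum_pair (show ((-1:ℤ)) ≠ 1 by norm_num)] <;> norm_num
  · intro x hx; fin_cases hx <;> norm_num [Finset.sum_pair (show ((-1:ℤ)) ≠ 1 by norm_num)] <;> norm_num
  · intro x hx y hy; fin_cases hx <;> fin_cases hy <;> norm_num
end

section
/- In the toy theory of Section 5, all measurements are perfectly mutually nondisturbing: for any initial pure state and any finite sequence of measurements drawn from {A₁, A₂, B₁, B₂}, if the sequence contains some observable X at two (not necessarily consecutive) positions, then with probability 1 the outcomes of these two measurements of X are equal. -/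
/-! ## The toy theory of Section 5

Hidden values: `und` = ∅ (undetermined), `pm`/`pp` = potential value −1/+1,
`am`/`ap` = actual value −1/+1. -/

/-- The five hidden values `V = {∅, −, +, ⊖, ⊕}`. -/
inductive HV
  | und | pm | pp | am | ap
  deriving DecidableEq

instance : Fintype HV :=
  ⟨{.und, .pm, .pp, .am, .ap}, fun x => by cases x <;> simp⟩

/-- The four ±1-valued observables. -/
inductive Obs
  | A1 | A2 | B1 | B2
  deriving DecidableEq

instance : Fintype Obs :=
  ⟨{.A1, .A2, .B1, .B2}, fun x => by cases x <;> simp⟩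

/-- A pure state: a hidden value for each observable. -/
abbrev PState := Obs → HV

/-- Construct a pure state from hidden values of `A₁, A₂, B₁, B₂`. -/
def mkS (a₁ a₂ b₁ b₂ : HV) : PState := fun x =>
  match x with
  | .A1 => a₁
  | .A2 => a₂
  | .B1 => b₁
  | .B2 => b₂

/-- The completely undetermined state `(∅, ∅, ∅, ∅)`. -/
def initS : PState := fun _ => HV.und

/-- The other observable of the same party. -/
def partner : Obs → Obs
  | .A1 => .A2
  | .A2 => .A1
  | .B1 => .B2
  | .B2 => .B1

/-- The actual hidden value recording outcome `o ∈ {-1, 1}`. -/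
def actual (o : ℤ) : HV := if o = 1 then .ap else .am

/-- Whether a hidden value is a potential value (− or +). -/
def isPot : HV → Bool
  | .pm => true
  | .pp => true
  | _ => false

/-- Probability of the outcome `o` when measuring observable `x` on state `s`:
uniform on ±1 if the hidden value is undetermined, otherwise the potential or actual
value occurs with certainty. -/
noncomputable def outProb (x : Obs) (s : PState) (o : ℤ) : ℝ :=
  match s x with
  | .und => if o = 1 ∨ o = -1 then 1/2 else 0
  | .pm => if o = -1 then 1 else 0
  | .pp => if o = 1 then 1 else 0
  | .am => if o = -1 then 1 else 0
  | .ap => if o = 1 then 1 else 0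

/-- Post-measurement states on the completely undetermined state `(∅,∅,∅,∅)`
(Table 3 of the paper). -/
def table : Obs → ℤ → PState
  | .A1, o => if o = 1 then mkS .ap .und .pp .pp else mkS .am .und .pm .pm
  | .A2, o => if o = 1 then mkS .und .ap .pp .pm else mkS .und .am .pm .pp
  | .B1, o => if o = 1 then mkS .pp .pp .ap .und else mkS .pm .pm .am .und
  | .B2, o => if o = 1 then mkS .pp .pm .und .ap else mkS .pm .pp .und .am

/-- The post-measurement state after measuring `x` with outcome `o` on state `s`,
where the partner observable of `x` receives the hidden value `w`: the measured
observable acquires the actual value matching the outcome, and all other hidden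
values stay untouched. -/
def post (x : Obs) (o : ℤ) (s : PState) (w : HV) : PState :=
  Function.update (Function.update s (partner x) w) x (actual o)

/-- The measurement kernel: `stepProb x s o t` is the probability that measuring
observable `x` on pre-measurement state `s` gives outcome `o` and post-measurement
state `t`.  On `(∅,∅,∅,∅)` it is given by Table 3; on any other state the outcome
is distributed according to `outProb`, the measured observable acquires the actual
value matching the outcome, all other hidden values stay untouched, except that a
potential value of the partner observable flips its sign with probability 1/2. -/
noncomputable def stepProb (x : Obs) (s : PState) (o : ℤ) (t : PState) : ℝ :=
  if s = initS then
    if (o = 1 ∨ o = -1) ∧ t = table x o then 1/2 else 0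
  else
    outProb x s o *
      (if isPot (s (partner x)) then
        (if t = post x o s HV.pm then 1/2 else 0) +
          (if t = post x o s HV.pp then 1/2 else 0)
      else
        if t = post x o s (s (partner x)) then 1 else 0)

/-- Probability that the measurement sequence `ms` on initial state `s` produces
the outcome sequence `os`. -/
noncomputable def seqProb : PState → List Obs → List ℤ → ℝ
  | _, [], [] => 1
  | s, x :: ms, o :: os => ∑ t : PState, stepProb x s o t * seqProb t ms os
  | _, _, _ => 0

lemma actual_ne_und (o : ℤ) : actual o ≠ HV.und := by
  unfold actual; split <;> simp

lemma isPot_actual (o : ℤ) : isPot (actual o) = false := by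
  unfold actual; split <;> rfl

lemma partner_ne (y : Obs) : partner y ≠ y := by cases y <;> decide

lemma post_self (y : Obs) (o : ℤ) (s : PState) (w : HV) : post y o s w y = actual o := by
  simp [post]

lemma post_other (x y : Obs) (o : ℤ) (s : PState) (w : HV)
    (hxy : x ≠ y) (hxp : x ≠ partner y) : post y o s w x = s x := by
  simp [post, Function.update_of_ne hxy, Function.update_of_ne hxp]

lemma post_partner (y : Obs) (o : ℤ) (s : PState) (w : HV) :
    post y o s w (partner y) = w := by
  simp [post, Function.update_of_ne (partner_ne y)]

lemma outProb_pm (x : Obs) (s : PState) (o : ℤ) (h : outProb x s o ≠ 0) :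
    o = 1 ∨ o = -1 := by
  rcases hx : s x <;> simp only [outProb, hx] at h <;> split_ifs at h <;> tauto

lemma outProb_actual (x : Obs) (s : PState) (o o₀ : ℤ) (h : outProb x s o ≠ 0)
    (hs : s x = actual o₀) (ho : o₀ = 1 ∨ o₀ = -1) : o = o₀ := by
  rcases ho with rfl | rfl
  · have hx : s x = HV.ap := by rw [hs]; simp [actual]
    simp only [outProb, hx] at h
    split_ifs at h with h1
    · exact h1
    · simp at h
  · have hx : s x = HV.am := by rw [hs]; simp [actual]
    simp only [outProb, hx] at h
    split_ifs at h with h1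
    · exact h1
    · simp at h

lemma step_post (y : Obs) (o : ℤ) (s t : PState) (hsi : s ≠ initS)
    (h : stepProb y s o t ≠ 0) :
    outProb y s o ≠ 0 ∧ ∃ w, t = post y o s w ∧
      (isPot (s (partner y)) = true ∨ w = s (partner y)) := by
  rw [stepProb, if_neg hsi] at h
  have hout := left_ne_zero_of_mul h
  have hr := right_ne_zero_of_mul h
  refine ⟨hout, ?_⟩
  by_cases hp : isPot (s (partner y)) = true
  · rw [if_pos hp] at hr
    by_cases h1 : t = post y o s HV.pm
    · exact ⟨_, h1, Or.inl hp⟩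
    by_cases h2 : t = post y o s HV.pp
    · exact ⟨_, h2, Or.inl hp⟩
    simp [h1, h2] at hr
  · rw [if_neg hp] at hr
    by_cases h1 : t = post y o s (s (partner y))
    · exact ⟨_, h1, Or.inr rfl⟩
    simp [h1] at hr

lemma step_first (x : Obs) (o : ℤ) (s t : PState) (h : stepProb x s o t ≠ 0) :
    (o = 1 ∨ o = -1) ∧ t x = actual o := by
  by_cases hsi : s = initS
  · rw [stepProb, if_pos hsi] at h
    split_ifs at h with hc
    · obtain ⟨ho, rfl⟩ := hc
      refine ⟨ho, ?_⟩
      rcases ho with rfl | rfl <;> cases x <;> norm_num [table, mkS, actual]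
    · simp at h
  · obtain ⟨hout, w, rfl, -⟩ := step_post x o s t hsi h
    exact ⟨outProb_pm x s o hout, post_self x o s w⟩

lemma ne_init_of_actual (x : Obs) (o₀ : ℤ) (s : PState) (hs : s x = actual o₀) :
    s ≠ initS := by
  intro hc; subst hc; exact actual_ne_und o₀ hs.symm

lemma step_keep (x y : Obs) (o₀ o : ℤ) (s t : PState) (h : stepProb y s o t ≠ 0)
    (hs : s x = actual o₀) (hxy : x ≠ y) : t x = actual o₀ := by
  obtain ⟨-, w, rfl, hw⟩ := step_post y o s t (ne_init_of_actual x o₀ s hs) h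
  by_cases hxp : x = partner y
  · subst hxp
    rw [post_partner]
    rcases hw with hp | rfl
    · rw [hs, isPot_actual] at hp; simp at hp
    · exact hs
  · rw [post_other x y o s w hxy hxp]; exact hs

lemma step_same (x : Obs) (o₀ o : ℤ) (s t : PState) (h : stepProb x s o t ≠ 0)
    (hs : s x = actual o₀) (ho : o₀ = 1 ∨ o₀ = -1) : o = o₀ ∧ t x = actual o₀ := by
  obtain ⟨hout, w, rfl, -⟩ := step_post x o s t (ne_init_of_actual x o₀ s hs) h
  have hoo := outProb_actual x s o o₀ hout hs ho
  subst hoo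
  exact ⟨rfl, post_self x o s w⟩

lemma seqProb_cons (y : Obs) (s : PState) (ms : List Obs) (os : List ℤ)
    (h : seqProb s (y :: ms) os ≠ 0) :
    ∃ o' os' t, os = o' :: os' ∧ stepProb y s o' t ≠ 0 ∧ seqProb t ms os' ≠ 0 := by
  cases os with
  | nil => exact absurd rfl h
  | cons o' os' =>
    rw [seqProb] at h
    obtain ⟨t, -, ht⟩ := Finset.exists_ne_zero_of_sum_ne_zero h
    exact ⟨o', os', t, rfl, mul_ne_zero_iff.mp ht⟩

/-- Once `x` has acquired actual value `o`, every later measurement of `x` yields `o`. -/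
lemma tracked (ms : List Obs) : ∀ (s : PState) (os : List ℤ) (x : Obs) (o : ℤ),
    seqProb s ms os ≠ 0 → s x = actual o → (o = 1 ∨ o = -1) →
    ∀ j, j < ms.length → ms.getD j Obs.A1 = x → os.getD j 0 = o := by
  induction ms with
  | nil => intro _ _ _ _ _ _ _ j hj; simp at hj
  | cons y ms ih =>
    intro s os x o h hs ho j hj hget
    obtain ⟨o', os', t, rfl, hstep, hseq⟩ := seqProb_cons y s ms os h
    cases j with
    | zero =>
      simp only [List.getD_cons_zero] at hget ⊢
      rw [hget] at hstep
      exact (step_same x o o' s t hstep hs ho).1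
    | succ j =>
      simp only [List.getD_cons_succ] at hget ⊢
      have ht : t x = actual o := by
        by_cases hxy : x = y
        · subst hxy; exact (step_same x o o' s t hstep hs ho).2
        · exact step_keep x y o o' s t hstep hs hxy
      exact ih t os' x o hseq ht ho j (by simpa using Nat.lt_of_succ_lt_succ hj) hget

/-- Lemma 2 of the paper. All measurements of the toy theory are
perfectly mutually nondisturbing: for any initial pure state and any measurement
sequence, if the sequence measures the same observable at two positions `k < l`, then
with probability 1 the two outcomes agree—i.e. every outcome sequence occurring with
nonzero probability has equal outcomes at positions `k` and `l`. -/
theorem measurements_mutually_nondisturbing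
    (s : PState) (ms : List Obs) (os : List ℤ)
    (hpos : seqProb s ms os ≠ 0)
    (k l : ℕ) (hkl : k < l) (hl : l < ms.length)
    (hsame : ms.getD k Obs.A1 = ms.getD l Obs.A1) :
    os.getD k 0 = os.getD l 0 := by
  induction ms generalizing s os k l with
  | nil => simp at hl
  | cons y ms ih =>
    obtain ⟨o', os', t, rfl, hstep, hseq⟩ := seqProb_cons y s ms os hpos
    cases k with
    | zero =>
      obtain ⟨l', rfl⟩ : ∃ l', l = l' + 1 := ⟨l - 1, by omega⟩
      simp only [List.getD_cons_zero, List.getD_cons_succ] at hsame ⊢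
      obtain ⟨ho, ht⟩ := step_first y o' s t hstep
      exact (tracked ms t os' y o' hseq ht ho l' (by simpa using Nat.lt_of_succ_lt_succ hl)
        hsame.symm).symm
    | succ k =>
      obtain ⟨l', rfl⟩ : ∃ l', l = l' + 1 := ⟨l - 1, by omega⟩
      simp only [List.getD_cons_succ] at hsame ⊢
      exact ih t os' hseq k l' (by omega) (by simpa using Nat.lt_of_succ_lt_succ hl) hsame
end

section
/- In the toy theory of Section 5, starting from the initial pure state (∅,∅,∅,∅), for each i, j ∈ {1,2} the joint distribution of the outcome of a measurement of A_i followed by a measurement of B_j coincides with the Popescu–Rohrlich box: the two outcomes are equal, each sign occurring with probability 1/2, for (i,j) ∈ {(1,1),(1,2),(2,1)}, and are opposite, each combination (+1,−1) and (−1,+1) occurring with probability 1/2, for (i,j) = (2,2). Hence the toy theory maximally violates the CHSH inequality. -/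
/-- The correlator `E(x, y) = ∑_{a,b ∈ {-1,1}} a·b·P(a,b)` of the outcomes of a
measurement of `x` followed by a measurement of `y`, starting from `(∅,∅,∅,∅)`. -/
noncomputable def toyCorrelator (x y : Obs) : ℝ :=
  ∑ a ∈ ({-1, 1} : Finset ℤ), ∑ b ∈ ({-1, 1} : Finset ℤ),
    ((a * b : ℤ) : ℝ) * seqProb initS [x, y] [a, b]

lemma seq_one (y : Obs) (s : PState) (b : ℤ) (h : s ≠ initS) :
    seqProb s [y] [b] = outProb y s b := by
  simp only [seqProb, mul_one, stepProb, if_neg h]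
  rw [← Finset.mul_sum]
  by_cases hp : isPot (s (partner y))
  · have h1 : post y b s HV.pm ≠ post y b s HV.pp := by
      intro he
      have := congrFun he (partner y)
      cases y <;> simp [post, partner, actual, Function.update] at this
    simp [hp, Finset.sum_add_distrib, Finset.sum_ite_eq']
    ring
  · simp [hp, Finset.sum_ite_eq']

lemma table_ne (x : Obs) (a : ℤ) : table x a ≠ initS := by
  have hx : table x a x ≠ HV.und := by
    rcases eq_or_ne a 1 with h | h <;> cases x <;> simp [table, h, mkS]
  intro he; exact hx (by rw [he]; rfl)

lemma seq_two (x y : Obs) (a b : ℤ) (ha : a = 1 ∨ a = -1) :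
    seqProb initS [x, y] [a, b] = 1/2 * outProb y (table x a) b := by
  have h0 : seqProb initS [x, y] [a, b]
      = ∑ t : PState, stepProb x initS a t * seqProb t [y] [b] := rfl
  rw [h0]
  simp only [stepProb, if_pos rfl, ha, true_and, if_true, ite_mul, zero_mul]
  rw [Finset.sum_ite_eq' Finset.univ (table x a)]
  simp [seq_one y (table x a) b (table_ne x a)]

/-- Proposition 2 of the paper. Starting from `(∅,∅,∅,∅)`, the
joint outcome distribution of measuring `Aᵢ` and then `Bⱼ` is the Popescu–Rohrlich
box: perfectly correlated (probability 1/2 each on equal signs) for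
`(i,j) ∈ {(1,1),(1,2),(2,1)}` and perfectly anticorrelated for `(i,j) = (2,2)`.
Hence the toy theory attains the algebraic maximum 4 of the CHSH expression. -/
theorem toy_theory_PR_box :
    (∀ a b : ℤ, (a = 1 ∨ a = -1) → (b = 1 ∨ b = -1) →
      seqProb initS [Obs.A1, Obs.B1] [a, b] = (if a = b then 1/2 else 0) ∧
      seqProb initS [Obs.A1, Obs.B2] [a, b] = (if a = b then 1/2 else 0) ∧
      seqProb initS [Obs.A2, Obs.B1] [a, b] = (if a = b then 1/2 else 0) ∧
      seqProb initS [Obs.A2, Obs.B2] [a, b] = (if a = -b then 1/2 else 0)) ∧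
    toyCorrelator Obs.A1 Obs.B1 + toyCorrelator Obs.A1 Obs.B2 +
      toyCorrelator Obs.A2 Obs.B1 - toyCorrelator Obs.A2 Obs.B2 = 4 := by
  have hmain : ∀ a b : ℤ, (a = 1 ∨ a = -1) → (b = 1 ∨ b = -1) →
      seqProb initS [Obs.A1, Obs.B1] [a, b] = (if a = b then 1/2 else 0) ∧
      seqProb initS [Obs.A1, Obs.B2] [a, b] = (if a = b then 1/2 else 0) ∧
      seqProb initS [Obs.A2, Obs.B1] [a, b] = (if a = b then 1/2 else 0) ∧
      seqProb initS [Obs.A2, Obs.B2] [a, b] = (if a = -b then 1/2 else 0) := by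
    rintro a b (rfl | rfl) (rfl | rfl) <;>
      refine ⟨?_, ?_, ?_, ?_⟩ <;>
      rw [seq_two _ _ _ _ (by norm_num)] <;>
      norm_num [table, mkS, outProb]
  refine ⟨hmain, ?_⟩
  have h11 := hmain 1 1 (Or.inl rfl) (Or.inl rfl)
  have h1m := hmain 1 (-1) (Or.inl rfl) (Or.inr rfl)
  have hm1 := hmain (-1) 1 (Or.inr rfl) (Or.inl rfl)
  have hmm := hmain (-1) (-1) (Or.inr rfl) (Or.inr rfl)
  simp only [toyCorrelator, Finset.sum_insert (by norm_num : (-1 : ℤ) ∉ ({1} : Finset ℤ)),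
    Finset.sum_singleton]
  rw [h11.1, h11.2.1, h11.2.2.1, h11.2.2.2, h1m.1, h1m.2.1, h1m.2.2.1, h1m.2.2.2,
    hm1.1, hm1.2.1, hm1.2.2.1, hm1.2.2.2, hmm.1, hmm.2.1, hmm.2.2.1, hmm.2.2.2]
  norm_num
end
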